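/- With K_G = π/(2 ln(1 + √2)), one has K_G = 1/√(1 - (8/π²) ∫_{π/(2 K_G)}^{∞} arcsinh(csch x) dx), where the improper integral converges and the quantity under the square root is positive. -/

import Mathlib

/-!
`f x = arsinh (csch x)` is a decreasing involution of `(0, ∞)` (indeed `sinh x * sinh (f x) = 1`),
and its fixed point is `L = arsinh 1 = ln (1 + √2)`. So the region under its graph is symmetric
in the diagonal, and it is the disjoint union of the square `(0, L)²`, the part lying over
`[L, ∞)` and the mirror image of that part; hence `∫₀^∞ f = L² + 2 ∫_L^∞ f`. On the other hand
`f x = log ((1 + e⁻ˣ) / (1 - e⁻ˣ)) = 2 ∑ e^{-(2k+1)x} / (2k+1)`, so `∫₀^∞ f = 2 ∑ 1 / (2k+1)²`,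
which is `π² / 4`. Together, `1 - (8/π²) ∫_L^∞ f = (2L/π)² = K_G⁻²`.
-/

open Real MeasureTheory

/-- The Grothendieck–Krivine constant K_G = π/(2 ln(1+√2)). -/
noncomputable def grothendieckKrivine : ℝ := π / (2 * Real.log (1 + Real.sqrt 2))

open Set

theorem StrictAntiOn.lt_apply_iff_lt_apply {α : Type*} [LinearOrder α] {f : α → α}
    {a x y : α} (hf : StrictAntiOn f (Ioi a)) (hinv : ∀ x ∈ Ioi a, f (f x) = x) (hx : a < x)
    (hy : a < y) :
    y < f x ↔ x < f y := by
  have key : ∀ {x y}, a < x → a < y → y < f x → x < f y := fun hx hy h => by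
    simpa [hinv _ hx] using hf hy (hy.trans h) h
  exact ⟨key hx hy, key hy hx⟩

section StrictAntiInvolution

variable {f : ℝ → ℝ} {c : ℝ}

theorem regionBetween_zero_Ioi_eq_union_of_strictAntiOn_involutive
    (hanti : StrictAntiOn f (Ioi 0)) (hinv : ∀ x ∈ Ioi 0, f (f x) = x) (hc : 0 < c)
    (hfc : f c = c) :
    regionBetween 0 f (Ioi 0) = (Ioo 0 c ×ˢ Ioo 0 c ∪ regionBetween 0 f (Ici c)) ∪
      Prod.swap ⁻¹' regionBetween 0 f (Ici c) := by
  ext ⟨x, y⟩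
  simp only [regionBetween, mem_union, mem_prod, mem_preimage, Prod.swap_prod_mk,
    mem_ofPred_eq, mem_Ioi, mem_Ici, mem_Ioo, Pi.zero_apply]
  constructor
  · rintro ⟨hx, hy, hyx⟩
    by_cases hxc : c ≤ x
    · exact Or.inl (Or.inr ⟨hxc, hy, hyx⟩)
    by_cases hyc : c ≤ y
    · exact Or.inr ⟨hyc, hx, (hanti.lt_apply_iff_lt_apply hinv hx hy).1 hyx⟩
    · exact Or.inl (Or.inl ⟨⟨hx, not_le.1 hxc⟩, hy, not_le.1 hyc⟩)
  · rintro ((⟨⟨hx, hxc⟩, hy, hyc⟩ | ⟨hcx, hy, hyx⟩) | ⟨hcy, hx, hxy⟩)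
    · exact ⟨hx, hy, hyc.trans (hfc ▸ hanti hx hc hxc)⟩
    · exact ⟨hc.trans_le hcx, hy, hyx⟩
    · have hy := hc.trans_le hcy
      exact ⟨hx, hy, (hanti.lt_apply_iff_lt_apply hinv hy hx).1 hxy⟩

theorem lintegral_Ioi_eq_sq_add_two_mul_of_strictAntiOn_involutive
    (hanti : StrictAntiOn f (Ioi 0)) (hinv : ∀ x ∈ Ioi 0, f (f x) = x) (hc : 0 < c)
    (hfc : f c = c) (hmeas : Measurable f) :
    ∫⁻ x in Ioi 0, ENNReal.ofReal (f x) =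
      ENNReal.ofReal c ^ 2 + 2 * ∫⁻ x in Ioi c, ENNReal.ofReal (f x) := by
  set A := regionBetween 0 f (Ici c)
  have hA : MeasurableSet A := measurableSet_regionBetween measurable_const hmeas measurableSet_Ici
  have hvol : ∀ s, MeasurableSet s →
      volume (regionBetween 0 f s) = ∫⁻ x in s, ENNReal.ofReal (f x) := fun s hs => by
    simpa [Measure.volume_eq_prod] using
      volume_regionBetween_eq_lintegral' (μ := volume) measurable_zero hmeas hs
  have hdisj_square : Disjoint (Ioo 0 c ×ˢ Ioo 0 c) A := by
    rw [Set.disjoint_left]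
    rintro ⟨x, y⟩ ⟨⟨-, hxc⟩, -⟩ ⟨hcx, -⟩
    exact not_le.2 hxc hcx
  have hdisj_swap : Disjoint (Ioo 0 c ×ˢ Ioo 0 c ∪ A) (Prod.swap ⁻¹' A) := by
    rw [Set.disjoint_left]
    rintro ⟨x, y⟩ (⟨-, -, hyc⟩ | ⟨hcx, -, hyx⟩) ⟨hcy, -⟩
    · exact not_le.2 hyc hcy
    · have hfx : f x ≤ c := (hanti.antitoneOn hc (hc.trans_le hcx) hcx).trans_eq hfc
      exact not_le.2 (hyx.trans_le hfx) hcy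
  rw [← hvol _ measurableSet_Ioi,
    regionBetween_zero_Ioi_eq_union_of_strictAntiOn_involutive hanti hinv hc hfc,
    measure_union hdisj_swap (measurable_swap hA), measure_union hdisj_square hA,
    Measure.volume_eq_prod, Measure.measurePreserving_swap.measure_preimage hA.nullMeasurableSet,
    Measure.prod_prod, ← Measure.volume_eq_prod, hvol _ measurableSet_Ici,
    setLIntegral_congr Ioi_ae_eq_Ici]
  simp [sq, two_mul, add_assoc]

end StrictAntiInvolution

theorem hasSum_one_div_odd_sq : HasSum (fun k : ℕ => 1 / (2 * k + 1 : ℝ) ^ 2) (π ^ 2 / 8) := by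
  set f : ℕ → ℝ := fun n => 1 / (n : ℝ) ^ 2
  have hodd : Summable (fun k => f (2 * k + 1)) :=
    hasSum_zeta_two.summable.comp_injective (i := fun k : ℕ => 2 * k + 1)
      (fun a b h => by simp only at h; omega)
  have heven : HasSum (fun k => f (2 * k)) (π ^ 2 / 24) := by
    rw [show π ^ 2 / 24 = 1 / 4 * (π ^ 2 / 6) by ring]
    refine (hasSum_zeta_two.mul_left (1 / 4)).congr_fun fun k => ?_
    simp only [f]; push_cast; ring
  have htotal := (heven.even_add_odd hodd.hasSum).unique hasSum_zeta_two
  convert hodd.hasSum using 1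
  · ext k; simp only [f]; push_cast; ring
  · linarith

theorem lintegral_exp_neg_pow_Ioi_zero {n : ℕ} (hn : n ≠ 0) :
    ∫⁻ x in Ioi 0, ENNReal.ofReal (exp (-x) ^ n) = ENNReal.ofReal (1 / n) := by
  have hn' : -(n : ℝ) < 0 := neg_lt_zero.2 (Nat.cast_pos.2 (Nat.pos_of_ne_zero hn))
  have h : ∀ x, exp (-x) ^ n = exp (-n * x) := fun x => by rw [← exp_nat_mul, neg_mul, mul_neg]
  simp only [h]
  rw [← ofReal_integral_eq_lintegral_ofReal (integrableOn_exp_mul_Ioi hn' 0)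
    (ae_of_all _ fun x => (exp_pos _).le), integral_exp_mul_Ioi hn']
  simp

theorem arsinh_inv_sinh_eq_log_sub_log {x : ℝ} (hx : 0 < x) :
    arsinh (1 / sinh x) = log (1 + exp (-x)) - log (1 - exp (-x)) := by
  have hsinh : sinh x = (1 - exp (-x) ^ 2) / (2 * exp (-x)) := by
    rw [sinh_eq, exp_neg]; field_simp
  have ht0 : 0 < exp (-x) := exp_pos _
  have ht1 : exp (-x) < 1 := exp_lt_one_iff.2 (neg_lt_zero.2 hx)
  rw [arsinh, hsinh]
  generalize exp (-x) = t at ht0 ht1 ⊢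
  have h1t : 0 < 1 - t := by linarith
  have h1t2 : 0 < 1 - t ^ 2 := by nlinarith
  have hsq : 1 + (1 / ((1 - t ^ 2) / (2 * t))) ^ 2 = ((1 + t ^ 2) / (1 - t ^ 2)) ^ 2 := by
    field_simp; ring
  rw [hsq, sqrt_sq (by positivity), ← log_div (by positivity) h1t.ne']
  congr 1
  field_simp; ring

theorem hasSum_arsinh_inv_sinh {x : ℝ} (hx : 0 < x) :
    HasSum (fun k : ℕ => 2 * (1 / (2 * k + 1)) * exp (-x) ^ (2 * k + 1))
      (arsinh (1 / sinh x)) := by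
  rw [arsinh_inv_sinh_eq_log_sub_log hx]
  refine hasSum_log_sub_log_of_abs_lt_one ?_
  rw [abs_of_pos (exp_pos _)]
  exact exp_lt_one_iff.2 (neg_lt_zero.2 hx)

theorem lintegral_arsinh_inv_sinh_Ioi_zero :
    ∫⁻ x in Ioi 0, ENNReal.ofReal (arsinh (1 / sinh x)) = ENNReal.ofReal (π ^ 2 / 4) := by
  have hcoef : ∀ k : ℕ, 0 ≤ 2 * (1 / (2 * k + 1 : ℝ)) := fun k => by positivity
  calc ∫⁻ x in Ioi 0, ENNReal.ofReal (arsinh (1 / sinh x))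
      = ∫⁻ x in Ioi 0, ∑' k : ℕ,
          ENNReal.ofReal (2 * (1 / (2 * k + 1))) * ENNReal.ofReal (exp (-x) ^ (2 * k + 1)) := by
        refine setLIntegral_congr_fun measurableSet_Ioi fun x hx => ?_
        rw [← (hasSum_arsinh_inv_sinh hx).tsum_eq, ENNReal.ofReal_tsum_of_nonneg
          (fun k => by positivity) (hasSum_arsinh_inv_sinh hx).summable]
        simp only [ENNReal.ofReal_mul (hcoef _)]
    _ = ∑' k : ℕ, ENNReal.ofReal (2 * (1 / (2 * k + 1) ^ 2)) := by
        rw [lintegral_tsum fun k => by fun_prop]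
        congr 1 with k
        rw [lintegral_const_mul _ (by fun_prop), lintegral_exp_neg_pow_Ioi_zero (by omega),
          ← ENNReal.ofReal_mul (hcoef k)]
        congr 1
        push_cast; field_simp
    _ = ENNReal.ofReal (π ^ 2 / 4) := by
        have h := hasSum_one_div_odd_sq.mul_left 2
        rw [← ENNReal.ofReal_tsum_of_nonneg (fun k => by positivity) h.summable, h.tsum_eq]
        congr 1
        ring

theorem measurable_arsinh_inv_sinh : Measurable fun x => arsinh (1 / sinh x) :=
  continuous_arsinh.measurable.comp (by fun_prop)

theorem strictAntiOn_arsinh_inv_sinh : StrictAntiOn (fun x => arsinh (1 / sinh x)) (Ioi 0) :=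
  fun _ hx _ _ hxy => arsinh_strictMono <|
    one_div_lt_one_div_of_lt (sinh_pos_iff.2 hx) (sinh_strictMono hxy)

theorem arsinh_inv_sinh_involutive : Function.Involutive fun x => arsinh (1 / sinh x) :=
  fun x => by simp [sinh_arsinh, arsinh_sinh]

theorem integrableOn_arsinh_inv_sinh_Ioi_arsinh_one_and_integral_eq :
    IntegrableOn (fun x => arsinh (1 / sinh x)) (Ioi (arsinh 1)) ∧
      ∫ x in Ioi (arsinh 1), arsinh (1 / sinh x) = π ^ 2 / 8 - arsinh 1 ^ 2 / 2 := by
  have hc : 0 < arsinh 1 := arsinh_pos_iff.2 one_pos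
  have hnonneg : 0 ≤ᵐ[volume.restrict (Ioi (arsinh 1))] fun x => arsinh (1 / sinh x) :=
    ae_restrict_of_forall_mem measurableSet_Ioi fun x hx =>
      arsinh_nonneg_iff.2 (one_div_nonneg.2 (sinh_pos_iff.2 (hc.trans hx)).le)
  have hsplit := lintegral_arsinh_inv_sinh_Ioi_zero.symm.trans
    (lintegral_Ioi_eq_sq_add_two_mul_of_strictAntiOn_involutive strictAntiOn_arsinh_inv_sinh
      (fun x _ => arsinh_inv_sinh_involutive x) hc (by simp) measurable_arsinh_inv_sinh)
  set J := ∫⁻ x in Ioi (arsinh 1), ENNReal.ofReal (arsinh (1 / sinh x))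
  have hJ : J ≠ ⊤ := fun h => by simp [h] at hsplit
  have hint : IntegrableOn (fun x => arsinh (1 / sinh x)) (Ioi (arsinh 1)) :=
    ⟨measurable_arsinh_inv_sinh.aestronglyMeasurable,
      (hasFiniteIntegral_iff_ofReal hnonneg).2 hJ.lt_top⟩
  refine ⟨hint, ?_⟩
  rw [integral_eq_lintegral_of_nonneg_ae hnonneg hint.aestronglyMeasurable]
  have hsplit_real := congrArg ENNReal.toReal hsplit
  rw [ENNReal.toReal_add (by simp) (ENNReal.mul_ne_top (by simp) hJ), ENNReal.toReal_mul,
    ENNReal.toReal_pow, ENNReal.toReal_ofReal (by positivity), ENNReal.toReal_ofReal hc.le,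
    ENNReal.toReal_ofNat] at hsplit_real
  linarith

/-- With K_G = π/(2 ln(1+√2)),
K_G = 1/√(1 - (8/π²) ∫_{π/(2K_G)}^∞ arcsinh(csch x) dx), where the improper integral
converges and the quantity under the square root is positive. -/
theorem grothendieck_krivine_arsinh_csch :
    IntegrableOn (fun x : ℝ => Real.arsinh (1 / Real.sinh x))
      (Set.Ioi (π / (2 * grothendieckKrivine))) ∧
    0 < 1 - (8 / π ^ 2) * ∫ x in Set.Ioi (π / (2 * grothendieckKrivine)),
              Real.arsinh (1 / Real.sinh x) ∧
    grothendieckKrivine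
      = 1 / Real.sqrt (1 - (8 / π ^ 2) *
          ∫ x in Set.Ioi (π / (2 * grothendieckKrivine)),
            Real.arsinh (1 / Real.sinh x)) := by
  have hc : 0 < arsinh 1 := arsinh_pos_iff.2 one_pos
  have hK : grothendieckKrivine = π / (2 * arsinh 1) := by
    norm_num [grothendieckKrivine, arsinh]
  have hc_eq : π / (2 * grothendieckKrivine) = arsinh 1 := by
    rw [hK]; field_simp
  obtain ⟨hint, hval⟩ := integrableOn_arsinh_inv_sinh_Ioi_arsinh_one_and_integral_eq
  have hrad : 1 - 8 / π ^ 2 * (π ^ 2 / 8 - arsinh 1 ^ 2 / 2) = (2 * arsinh 1 / π) ^ 2 := by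
    field_simp; ring
  rw [hc_eq, hval, hrad, sqrt_sq (by positivity), one_div_div, hK]
  exact ⟨hint, by positivity, rfl⟩
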